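/- Let L = (ℓ_{i,j}) be any non-singular lower-triangular infinite matrix over F_2 (ℓ_{i,i} = 1, ℓ_{i,j} = 0 for j > i), let P be the upper triangular Pascal matrix over F_2, let w ≥ 0 and m = 2^w. Consider the digital sequence with generating matrices (C_1, C_2) = (L, P). Then the points x_1 and x_k with k = 2^{m−1} + 1 satisfy ‖x_1 − x_k‖_∞ ≤ 2^{1−m}, hence the first 2^m points Q_{2^m} satisfy q_∞(Q_{2^m}) ≤ 2^{−m}. -/

import Mathlib

/-- The coordinate of the `n`-th point of a digital sequence over `F_2` with (infinite)
generating matrix `C`: the binary digits of the coordinate are `C n⃗`, where `n⃗` is the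
vector of binary digits of `n`. -/
noncomputable def dsCoord (C : ℕ → ℕ → ZMod 2) (n : ℕ) : ℝ :=
  ∑' i : ℕ,
    ((∑ l ∈ Finset.range (Nat.digits 2 n).length,
        C i l * ((Nat.digits 2 n).getD l 0 : ZMod 2)).val : ℝ) / 2 ^ (i + 1)

/-- The upper triangular Pascal matrix over `F_2` (0-based): `P_{i,j} = C(j,i) mod 2`. -/
def pascal2 : ℕ → ℕ → ZMod 2 := fun i j => (Nat.choose j i : ZMod 2)

namespace Stmt16Aux

/-- The digit vector of the `n`-th point. -/
noncomputable def dig (C : ℕ → ℕ → ZMod 2) (n : ℕ) (i : ℕ) : ZMod 2 :=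
  ∑ l ∈ Finset.range (Nat.digits 2 n).length,
    C i l * ((Nat.digits 2 n).getD l 0 : ZMod 2)

/-- Value of a binary digit string. -/
noncomputable def S (r : ℕ → ZMod 2) : ℝ := ∑' i : ℕ, ((r i).val : ℝ) / 2 ^ (i + 1)

lemma dsCoord_eq (C : ℕ → ℕ → ZMod 2) (n : ℕ) : dsCoord C n = S (dig C n) := rfl

lemma geom_eq (i : ℕ) : (1 : ℝ) / 2 / 2 ^ i = (1 / 2 : ℝ) ^ (i + 1) := by
  rw [div_div, ← pow_succ', one_div_pow]

lemma summable_geom : Summable (fun i : ℕ => ((1:ℝ)/2) ^ (i+1)) := by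
  have h := summable_geometric_two' 1
  exact h.congr fun i => geom_eq i

lemma tsum_geom : ∑' i : ℕ, ((1:ℝ)/2) ^ (i+1) = 1 := by
  have h := tsum_geometric_two' 1
  calc ∑' i : ℕ, ((1:ℝ)/2) ^ (i+1) = ∑' i : ℕ, (1:ℝ)/2/2^i :=
        tsum_congr fun i => (geom_eq i).symm
    _ = 1 := h

lemma val_le_one (x : ZMod 2) : ((x.val : ℝ)) ≤ 1 := by
  have : x.val < 2 := ZMod.val_lt x
  exact_mod_cast Nat.lt_succ_iff.mp this

lemma term_bound (r : ℕ → ZMod 2) (i : ℕ) :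
    ((r i).val : ℝ) / 2 ^ (i + 1) ≤ ((1:ℝ)/2) ^ (i+1) := by
  rw [div_pow, one_pow]
  gcongr
  exact val_le_one _

lemma summable_S (r : ℕ → ZMod 2) : Summable (fun i => ((r i).val : ℝ) / 2 ^ (i + 1)) := by
  exact Summable.of_nonneg_of_le (fun i => by positivity) (term_bound r) summable_geom

lemma S_nonneg (r : ℕ → ZMod 2) : 0 ≤ S r :=
  tsum_nonneg fun i => by positivity

lemma S_le_one (r : ℕ → ZMod 2) : S r ≤ 1 := by
  rw [← tsum_geom]
  exact Summable.tsum_le_tsum (term_bound r) (summable_S r) summable_geom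

/-- Tail bound: digit strings agreeing below `N` yield values within `2⁻ᴺ`. -/
lemma abs_S_sub_le (r s : ℕ → ZMod 2) (N : ℕ) (h : ∀ i < N, r i = s i) :
    |S r - S s| ≤ ((1:ℝ)/2) ^ N := by
  have hr := summable_S r
  have hs := summable_S s
  set c : ℕ → ℝ := fun i => ((r i).val : ℝ) / 2 ^ (i + 1) - ((s i).val : ℝ) / 2 ^ (i + 1)
    with hc
  have hcs : Summable c := hr.sub hs
  have h1 : S r - S s = ∑' i, c i := (Summable.tsum_sub hr hs).symm
  set d : ℕ → ℝ := fun i => if i < N then 0 else ((1:ℝ)/2) ^ (i+1) with hd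
  have hds : Summable d := by
    apply Summable.of_nonneg_of_le (fun i => ?_) (fun i => ?_) summable_geom
    · simp only [hd]; split <;> positivity
    · simp only [hd]; split
      · positivity
      · exact le_refl _
  have hcd : ∀ i, |c i| ≤ d i := by
    intro i
    simp only [hc, hd]
    split
    · next hiN => rw [h i hiN]; simp
    · rw [abs_sub_le_iff]
      constructor
      · have h1 := term_bound r i
        have h0 : (0:ℝ) ≤ ((s i).val:ℝ)/2^(i+1) := by positivity
        linarith
      · have h1 := term_bound s i
        have h0 : (0:ℝ) ≤ ((r i).val:ℝ)/2^(i+1) := by positivity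
        linarith
  have habs : |∑' i, c i| ≤ ∑' i, d i := by
    calc |∑' i, c i| ≤ ∑' i, |c i| := by
          simpa [Real.norm_eq_abs] using norm_tsum_le_tsum_norm (f := c) (by simpa [Real.norm_eq_abs] using hcs.abs)
      _ ≤ ∑' i, d i := Summable.tsum_le_tsum hcd hcs.abs hds
  have hdval : ∑' i, d i = ((1:ℝ)/2) ^ N := by
    have hsplit := Summable.sum_add_tsum_nat_add N hds
    have h0 : ∑ i ∈ Finset.range N, d i = 0 := by
      apply Finset.sum_eq_zero
      intro i hi
      simp only [hd, if_pos (Finset.mem_range.mp hi)]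
    have h2 : ∀ i : ℕ, d (i + N) = ((1:ℝ)/2) ^ N * ((1:ℝ)/2) ^ (i+1) := by
      intro i
      simp only [hd, if_neg (by omega : ¬ i + N < N)]
      rw [← pow_add]
      congr 1
      omega
    calc ∑' i, d i = ∑ i ∈ Finset.range N, d i + ∑' i, d (i + N) := hsplit.symm
      _ = ∑' i, ((1:ℝ)/2) ^ N * ((1:ℝ)/2) ^ (i+1) := by rw [h0, zero_add]; exact tsum_congr h2
      _ = ((1:ℝ)/2) ^ N * ∑' i, ((1:ℝ)/2) ^ (i+1) := tsum_mul_left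
      _ = ((1:ℝ)/2) ^ N := by rw [tsum_geom, mul_one]
  rw [h1]
  exact habs.trans (le_of_eq hdval)

end Stmt16Aux

namespace Stmt16Aux

lemma digits_one : Nat.digits 2 1 = [1] := by simp

lemma digits_pow2 (t : ℕ) : Nat.digits 2 (2 ^ t) = List.replicate t 0 ++ [1] := by
  induction t with
  | zero => simpa using digits_one
  | succ t ih =>
    rw [Nat.digits_def' (by norm_num) (by positivity)]
    have h1 : 2 ^ (t+1) % 2 = 0 := by
      simp [pow_succ, Nat.mul_mod_left]
    have h2 : 2 ^ (t+1) / 2 = 2 ^ t := by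
      rw [pow_succ]; exact Nat.mul_div_cancel _ (by norm_num)
    rw [h1, h2, ih]
    simp [List.replicate_succ]

lemma digits_kk (s : ℕ) (hs : 1 ≤ s) :
    Nat.digits 2 (2 ^ s + 1) = 1 :: (List.replicate (s-1) 0 ++ [1]) := by
  obtain ⟨t, rfl⟩ : ∃ t, s = t + 1 := ⟨s-1, by omega⟩
  rw [Nat.digits_def' (by norm_num) (by positivity)]
  have h1 : (2 ^ (t+1) + 1) % 2 = 1 := by rw [pow_succ]; omega
  have h2 : (2 ^ (t+1) + 1) / 2 = 2 ^ t := by rw [pow_succ]; omega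
  rw [h1, h2, digits_pow2]
  simp

lemma digits_kk_len (s : ℕ) (hs : 1 ≤ s) :
    (Nat.digits 2 (2 ^ s + 1)).length = s + 1 := by
  rw [digits_kk s hs]
  simp
  omega

lemma digits_kk_getD (s : ℕ) (hs : 1 ≤ s) (l : ℕ) :
    (Nat.digits 2 (2 ^ s + 1)).getD l 0 = if l = 0 ∨ l = s then 1 else 0 := by
  rw [digits_kk s hs]
  match l with
  | 0 => simp
  | (l+1) =>
    simp only [List.getD_cons_succ]
    have hne0 : ¬ (l + 1 = 0) := by omega
    by_cases hl : l < s - 1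
    · rw [List.getD_append _ _ _ _ (by simpa using hl)]
      have hne : ¬ (l + 1 = s) := by omega
      rw [List.getD_eq_getElem _ _ (by simpa using hl)]
      simp [hne0, hne]
    · by_cases hl2 : l = s - 1
      · subst hl2
        rw [List.getD_append_right _ _ _ _ (by simp)]
        have heq : s - 1 + 1 = s := by omega
        simp [heq]
      · rw [List.getD_eq_default _ _ (by simp; omega)]
        have hne : ¬ (l + 1 = s) := by omega
        simp [hne0, hne]

/-- Lucas-type fact: all binomial coefficients `C(2^w - 1, j)` are odd. -/
lemma choose_pow_sub_one (w : ℕ) : ∀ j, j ≤ 2 ^ w - 1 →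
    ((Nat.choose (2 ^ w - 1) j : ZMod 2) = 1) := by
  intro j
  induction j with
  | zero => intro _; simp
  | succ j ih =>
    intro hj
    have hj' : j ≤ 2 ^ w - 1 := by omega
    have hpos : 1 ≤ 2 ^ w := Nat.one_le_two_pow
    have hpascal : Nat.choose (2 ^ w) (j+1)
        = Nat.choose (2 ^ w - 1) j + Nat.choose (2 ^ w - 1) (j+1) := by
      have : 2 ^ w = (2 ^ w - 1) + 1 := by omega
      rw [this]
      exact Nat.choose_succ_succ _ _
    have heven : ((Nat.choose (2 ^ w) (j+1) : ZMod 2)) = 0 := by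
      rw [ZMod.natCast_eq_zero_iff]
      exact Nat.Prime.dvd_choose_pow Nat.prime_two (by omega) (by omega)
    have := congrArg (fun n : ℕ => (n : ZMod 2)) hpascal
    simp only [Nat.cast_add] at this
    rw [heven, ih hj'] at this
    have h2 : ((Nat.choose (2 ^ w - 1) (j+1) : ZMod 2)) = -1 := by
      linear_combination this.symm
    rw [h2]; decide

end Stmt16Aux

namespace Stmt16Aux

lemma dig_zero (C : ℕ → ℕ → ZMod 2) (i : ℕ) : dig C 0 i = 0 := by
  simp [dig]

lemma dig_one (C : ℕ → ℕ → ZMod 2) (i : ℕ) : dig C 1 i = C i 0 := by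
  simp [dig, digits_one]

lemma dig_kk (C : ℕ → ℕ → ZMod 2) (s : ℕ) (hs : 1 ≤ s) (i : ℕ) :
    dig C (2 ^ s + 1) i = C i 0 + C i s := by
  unfold dig
  rw [digits_kk_len s hs]
  have hsum : ∀ l ∈ Finset.range (s+1),
      C i l * ((Nat.digits 2 (2 ^ s + 1)).getD l 0 : ZMod 2)
      = (if l = 0 then C i l else 0) + (if l = s then C i l else 0) := by
    intro l hl
    rw [digits_kk_getD s hs l]
    by_cases h0 : l = 0
    · subst h0
      have : ¬ (0 = s) := by omega
      simp [this]
    · by_cases h1 : l = s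
      · subst h1
        simp [h0]
      · simp [h0, h1]
  rw [Finset.sum_congr rfl hsum, Finset.sum_add_distrib,
    Finset.sum_ite_eq' (Finset.range (s+1)) 0 (fun l => C i l),
    Finset.sum_ite_eq' (Finset.range (s+1)) s (fun l => C i l)]
  have h0 : (0:ℕ) ∈ Finset.range (s+1) := by simp
  have h1 : s ∈ Finset.range (s+1) := by simp
  simp [h0, h1]

lemma S_dig_zero (C : ℕ → ℕ → ZMod 2) : S (dig C 0) = 0 := by
  unfold S
  rw [tsum_eq_sum (s := ∅)]
  · simp
  · intro i _
    rw [dig_zero]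
    simp

lemma S_pascal_one : S (dig pascal2 1) = 1 / 2 := by
  unfold S
  rw [tsum_eq_single 0]
  · rw [dig_one]
    have : pascal2 0 0 = 1 := by simp [pascal2]
    rw [this]
    norm_num [show ((1:ZMod 2)).val = 1 from rfl]
  · intro i hi
    rw [dig_one]
    have : pascal2 i 0 = 0 := by
      simp only [pascal2]
      rw [Nat.choose_eq_zero_of_lt (by omega)]
      simp
    rw [this]
    simp

lemma geom_fin (n : ℕ) : ∑ j ∈ Finset.range n, ((1:ℝ)/2) ^ (j+1) = 1 - ((1:ℝ)/2) ^ n := by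
  induction n with
  | zero => simp
  | succ n ih =>
    rw [Finset.sum_range_succ, ih, pow_succ]
    ring

lemma S_pascal_kk (w : ℕ) (s : ℕ) (hsval : s = 2 ^ w - 1) (hs : 1 ≤ s) :
    S (dig pascal2 (2 ^ s + 1)) = 1 / 2 - ((1:ℝ)/2) ^ (s+1) := by
  have hB : ∀ i, dig pascal2 (2 ^ s + 1) i
      = ((Nat.choose 0 i : ZMod 2) + (Nat.choose s i : ZMod 2)) := by
    intro i
    rw [dig_kk pascal2 s hs i]
    rfl
  have hBval : ∀ i, ((dig pascal2 (2 ^ s + 1) i).val : ℝ)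
      = if i = 0 then 0 else if i ≤ s then 1 else 0 := by
    intro i
    rw [hB i]
    by_cases h0 : i = 0
    · subst h0
      have hz : ((Nat.choose 0 0 : ZMod 2) + (Nat.choose s 0 : ZMod 2)) = 0 := by
        simp only [Nat.choose_zero_right, Nat.cast_one]
        decide
      rw [hz]
      simp
    · by_cases h1 : i ≤ s
      · have hc0 : ((Nat.choose 0 i : ZMod 2)) = 0 := by
          rw [Nat.choose_eq_zero_of_lt (by omega)]; simp
        have hc1 : ((Nat.choose s i : ZMod 2)) = 1 := by
          rw [hsval]
          exact choose_pow_sub_one w i (by omega)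
        rw [hc0, hc1]
        simp only [zero_add, h0, if_false, h1, if_true]
        norm_num [show ((1:ZMod 2)).val = 1 from rfl]
      · have hc0 : ((Nat.choose 0 i : ZMod 2)) = 0 := by
          rw [Nat.choose_eq_zero_of_lt (by omega)]; simp
        have hc1 : ((Nat.choose s i : ZMod 2)) = 0 := by
          rw [Nat.choose_eq_zero_of_lt (by omega)]; simp
        rw [hc0, hc1]
        simp [h0, h1]
  unfold S
  rw [tsum_eq_sum (s := Finset.range (s+1))]
  · have : ∀ j ∈ Finset.range (s+1),
        ((dig pascal2 (2 ^ s + 1) j).val : ℝ) / 2 ^ (j+1)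
        = ((1:ℝ)/2)^(j+1) - (if j = 0 then (1:ℝ)/2 else 0) := by
      intro j hj
      rw [hBval j]
      have hj' : j ≤ s := by simpa [Nat.lt_succ_iff] using hj
      by_cases h0 : j = 0
      · subst h0; norm_num
      · simp only [h0, hj', if_false, if_true, div_pow, one_pow]
        norm_num
    rw [Finset.sum_congr rfl this, Finset.sum_sub_distrib, geom_fin,
      Finset.sum_ite_eq' (Finset.range (s+1)) 0 (fun _ => (1:ℝ)/2)]
    simp only [Finset.mem_range, Nat.succ_pos, if_true, Nat.zero_lt_succ]
    norm_num
    ring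
  · intro i hi
    rw [hBval i]
    have : ¬ i ≤ s := by simpa [Nat.lt_succ_iff] using hi
    simp [this, show i ≠ 0 by omega]

lemma pow_half_eq (k : ℕ) : ((1:ℝ)/2) ^ k = (2:ℝ) ^ (-(k:ℤ)) := by
  rw [zpow_neg, zpow_natCast, one_div, inv_pow]

end Stmt16Aux

open Stmt16Aux

/-- For any non-singular lower-triangular `L` over `F_2`, `w ≥ 0`, `m = 2^w`, the digital
sequence with generating matrices `(C_1, C_2) = (L, P)` (with `P` the Pascal matrix) has
`‖x_1 − x_k‖_∞ ≤ 2^{1−m}` for `k = 2^{m−1} + 1`; hence the first `2^m` points satisfy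
`q_∞(Q_{2^m}) ≤ 2^{−m}`. -/
theorem stmt16 (L : ℕ → ℕ → ZMod 2) (hdiag : ∀ i, L i i = 1)
    (hzero : ∀ i j, i < j → L i j = 0) (w : ℕ) :
    ∀ m kk : ℕ, m = 2 ^ w → kk = 2 ^ (m - 1) + 1 →
    ∀ pt : ℕ → ℝ × ℝ, (pt = fun n => (dsCoord L n, dsCoord pascal2 n)) →
    dist (pt 1) (pt kk) ≤ (2 : ℝ) ^ ((1 : ℤ) - (m : ℤ)) ∧
    sInf {r : ℝ | ∃ a < 2 ^ m, ∃ c < 2 ^ m, pt a ≠ pt c ∧ r = dist (pt a) (pt c) / 2}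
      ≤ ((2 : ℝ) ^ m)⁻¹ := by
  intro m kk hm hkk pt hpt
  have hm1 : 1 ≤ m := by rw [hm]; exact Nat.one_le_two_pow
  have hptn : ∀ n, pt n = (dsCoord L n, dsCoord pascal2 n) := fun n => by rw [hpt]
  have hb0 : ∀ (C : ℕ → ℕ → ZMod 2) (n : ℕ), 0 ≤ dsCoord C n := fun C n => by
    rw [dsCoord_eq]; exact S_nonneg _
  have hb1 : ∀ (C : ℕ → ℕ → ZMod 2) (n : ℕ), dsCoord C n ≤ 1 := fun C n => by
    rw [dsCoord_eq]; exact S_le_one _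
  have hbdd : BddBelow {r : ℝ | ∃ a < 2 ^ m, ∃ c < 2 ^ m,
      pt a ≠ pt c ∧ r = dist (pt a) (pt c) / 2} := by
    refine ⟨0, ?_⟩
    rintro r ⟨a, _, c, _, _, rfl⟩
    positivity
  have hsec1 : dsCoord pascal2 1 = 1 / 2 := by
    rw [dsCoord_eq]; exact S_pascal_one
  by_cases hm2 : m = 1
  · -- m = 1
    subst hm2
    have hdist01 : ∀ a c : ℕ, dist (pt a) (pt c) ≤ 1 := by
      intro a c
      rw [hptn a, hptn c, Prod.dist_eq]
      apply max_le
      · rw [Real.dist_eq, abs_sub_le_iff]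
        constructor <;> [have := hb0 L c; have := hb0 L a] <;>
          [have h2 := hb1 L a; have h2 := hb1 L c] <;> simp at * <;> linarith
      · rw [Real.dist_eq, abs_sub_le_iff]
        constructor <;> [have := hb0 pascal2 c; have := hb0 pascal2 a] <;>
          [have h2 := hb1 pascal2 a; have h2 := hb1 pascal2 c] <;> simp at * <;> linarith
    constructor
    · have : ((1:ℤ) - ((1:ℕ):ℤ)) = 0 := by norm_num
      rw [this, zpow_zero]
      exact hdist01 1 kk
    · have hne : pt 0 ≠ pt 1 := by
        rw [hptn 0, hptn 1]
        intro h
        have h2 := congrArg Prod.snd h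
        simp only at h2
        rw [hsec1] at h2
        have h0 : dsCoord pascal2 0 = 0 := by rw [dsCoord_eq]; exact S_dig_zero pascal2
        rw [h0] at h2
        norm_num at h2
      have hmem : dist (pt 0) (pt 1) / 2 ∈ {r : ℝ | ∃ a < 2 ^ 1, ∃ c < 2 ^ 1,
          pt a ≠ pt c ∧ r = dist (pt a) (pt c) / 2} :=
        ⟨0, by norm_num, 1, by norm_num, hne, rfl⟩
      refine (csInf_le hbdd hmem).trans ?_
      have := hdist01 0 1
      rw [pow_one]
      norm_num
      linarith
  · -- m ≥ 2
    have hm2' : 2 ≤ m := by omega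
    set s := m - 1 with hsdef
    have hs : 1 ≤ s := by omega
    have hms : m = s + 1 := by omega
    have hsval : s = 2 ^ w - 1 := by omega
    have hkk' : kk = 2 ^ s + 1 := hkk
    have hsec2 : dsCoord pascal2 kk = 1 / 2 - ((1:ℝ)/2) ^ (s+1) := by
      rw [hkk', dsCoord_eq]
      exact S_pascal_kk w s hsval hs
    have hfirst : |dsCoord L 1 - dsCoord L kk| ≤ ((1:ℝ)/2) ^ s := by
      rw [hkk', dsCoord_eq, dsCoord_eq]
      apply abs_S_sub_le
      intro i hi
      rw [dig_one, dig_kk L s hs i, hzero i s hi, add_zero]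
    have hhalfpos : (0:ℝ) < ((1:ℝ)/2) ^ (s+1) := by positivity
    have hdistle : dist (pt 1) (pt kk) ≤ ((1:ℝ)/2) ^ s := by
      rw [hptn 1, hptn kk, Prod.dist_eq]
      apply max_le
      · rw [Real.dist_eq]; exact hfirst
      · rw [Real.dist_eq, hsec1, hsec2]
        have : (1:ℝ)/2 - (1/2 - ((1:ℝ)/2)^(s+1)) = ((1:ℝ)/2)^(s+1) := by ring
        rw [this, abs_of_pos hhalfpos, pow_succ]
        nlinarith [pow_pos (by norm_num : (0:ℝ) < 1/2) s]
    have hzpow : (2:ℝ) ^ ((1:ℤ) - (m:ℤ)) = ((1:ℝ)/2) ^ s := by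
      rw [pow_half_eq]
      congr 1
      have : (m:ℤ) = (s:ℤ) + 1 := by exact_mod_cast hms
      omega
    constructor
    · rw [hzpow]; exact hdistle
    · have hne : pt 1 ≠ pt kk := by
        rw [hptn 1, hptn kk]
        intro h
        have h2 := congrArg Prod.snd h
        simp only at h2
        rw [hsec1, hsec2] at h2
        nlinarith
    -- membership
      have h1lt : 1 < 2 ^ m := Nat.one_lt_two_pow (by omega)
      have hkklt : kk < 2 ^ m := by
        rw [hkk', hms, pow_succ]
        have h2s : 1 < 2 ^ s := Nat.one_lt_two_pow (by omega)
        omega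
      have hmem : dist (pt 1) (pt kk) / 2 ∈ {r : ℝ | ∃ a < 2 ^ m, ∃ c < 2 ^ m,
          pt a ≠ pt c ∧ r = dist (pt a) (pt c) / 2} :=
        ⟨1, h1lt, kk, hkklt, hne, rfl⟩
      refine (csInf_le hbdd hmem).trans ?_
      have heq : (((2:ℝ) ^ m)⁻¹) = ((1:ℝ)/2) ^ s / 2 := by
        rw [hms, pow_succ]
        rw [div_pow, one_pow]
        field_simp
      rw [heq]
      linarith
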